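/- arXiv:1811.12097 — 5 statements merged into one kernel-verified Lean document; each statement's English description precedes it below -/
import Mathlib

section
/- Let P_n be defined by P_3 = 1 and P_{n+1} = (1+t)·P_n + (t/2)·∑_{j=2}^{n-2} C(n,j)·P_{j+1}·P_{n-j+1}. Then for every n ≥ 3, the sum ∑_{j=2}^{n-2} C(n,j)·P_{j+1}·P_{n-j+1} has all even integer coefficients, so P_{n+1} has integer coefficients. -/
open Polynomial Finset

/-!
By strong induction every `P n` has integer coefficients. Granted this for the smaller indices,
the sum is `∑ C(n,j) f j` with `f` an integer polynomial satisfying `f (n - j) = f j`. Modulo 2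
the terms `j` and `n - j` cancel in pairs (as `C(n,j) = C(n,n-j)`), and the self-paired term
`j = n/2` carries the even central binomial coefficient `C(2m,m)`; so the sum is twice an integer
polynomial, which the factor `1/2` in the recursion turns back into an integer polynomial.
-/

theorem two_dvd_sum_choose_mul_of_symm {R : Type*} [CommRing R] {n a : ℕ} (ha : 1 ≤ a)
    (f : ℕ → R) (hf : ∀ j ∈ Icc a (n - a), f (n - j) = f j) :
    2 ∣ ∑ j ∈ Icc a (n - a), (n.choose j : R) * f j := by
  let π := Ideal.Quotient.mk (Ideal.span {(2 : R)})
  have hπ2 : π 2 = 0 := Ideal.Quotient.eq_zero_iff_mem.mpr (Ideal.mem_span_singleton_self 2)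
  rw [← Ideal.mem_span_singleton, ← Ideal.Quotient.eq_zero_iff_mem, map_sum]
  refine sum_involution (fun j _ => n - j) (fun j hj => ?_) (fun j hj hne hfix => hne ?_)
    (fun j hj => by simp only [mem_Icc] at hj ⊢; omega)
    (fun j hj => by simp only [mem_Icc] at hj; omega)
  · rw [Nat.choose_symm (by simp only [mem_Icc] at hj; omega), hf j hj, ← map_add, ← two_mul,
      map_mul, hπ2, zero_mul]
  · obtain ⟨c, hc⟩ := Nat.two_dvd_centralBinom_of_one_le (n := j)
      (by simp only [mem_Icc] at hj; omega)
    rw [Nat.centralBinom_eq_two_mul_choose, show 2 * j = n by simp only [mem_Icc] at hj; omega]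
      at hc
    rw [hc, Nat.cast_mul, Nat.cast_ofNat, mul_assoc, map_mul, hπ2, zero_mul]

theorem exists_sum_choose_mul_mul_eq_two_mul_map {R : Type*} [CommRing R] (P : ℕ → R[X])
    (n : ℕ) (hP : ∀ m ∈ Icc 3 (n - 1), P m ∈ lifts (Int.castRingHom R)) :
    ∃ q : ℤ[X], ∑ j ∈ Icc 2 (n - 2), (n.choose j : R[X]) * P (j + 1) * P (n - j + 1) =
      2 * q.map (Int.castRingHom R) := by
  choose! Q hQ using fun m hm => (mem_lifts _).mp (hP m hm)
  have hQ' : ∀ j ∈ Icc 2 (n - 2), (Q (j + 1) * Q (n - j + 1)).map (Int.castRingHom R) =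
      P (j + 1) * P (n - j + 1) := by
    intro j hj
    simp only [mem_Icc] at hj
    rw [Polynomial.map_mul, hQ _ (by simp only [mem_Icc]; omega),
      hQ _ (by simp only [mem_Icc]; omega)]
  obtain ⟨q, hq⟩ := two_dvd_sum_choose_mul_of_symm (n := n) (a := 2) one_le_two
    (fun j => Q (j + 1) * Q (n - j + 1)) (fun j hj => by
      simp only [mem_Icc] at hj
      rw [show n - (n - j) = j by omega, mul_comm])
  refine ⟨q, ?_⟩
  rw [← Polynomial.map_ofNat (Int.castRingHom R), ← Polynomial.map_mul, ← hq, Polynomial.map_sum]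
  refine sum_congr rfl fun j hj => ?_
  rw [Polynomial.map_mul, Polynomial.map_natCast, hQ' j hj, mul_assoc]

theorem keel_integer_coeffs (P : ℕ → Polynomial ℚ) (h3 : P 3 = 1)
    (hrec : ∀ n, 3 ≤ n → P (n + 1) = (1 + X) * P n +
      C (1/2 : ℚ) * X * ∑ j ∈ Icc 2 (n - 2),
        (n.choose j : Polynomial ℚ) * P (j + 1) * P (n - j + 1)) :
    ∀ n, 3 ≤ n →
      (∀ k, ∃ m : ℤ, (∑ j ∈ Icc 2 (n - 2),
        (n.choose j : Polynomial ℚ) * P (j + 1) * P (n - j + 1)).coeff k = 2 * m) ∧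
      (∀ k, ∃ m : ℤ, (P (n + 1)).coeff k = m) := by
  have hP : ∀ n, 3 ≤ n → P n ∈ lifts (Int.castRingHom ℚ) := by
    intro n hn
    induction n using Nat.strong_induction_on with
    | _ n ih =>
      rcases hn.eq_or_lt with rfl | hlt
      · rw [h3]; exact one_mem _
      obtain ⟨m, rfl⟩ : ∃ m, n = m + 1 := ⟨n - 1, by omega⟩
      have hm : 3 ≤ m := by omega
      obtain ⟨q, hq⟩ := exists_sum_choose_mul_mul_eq_two_mul_map P m
        fun l hl => ih l (by simp only [mem_Icc] at hl; omega) (mem_Icc.mp hl).1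
      have hhalf : C (1/2 : ℚ) * X * (2 * q.map (Int.castRingHom ℚ)) =
          X * q.map (Int.castRingHom ℚ) := by
        have h2 : C (1/2 : ℚ) * 2 = 1 := by rw [← C_ofNat, ← C_mul]; norm_num
        linear_combination (X * q.map (Int.castRingHom ℚ)) * h2
      rw [hrec m hm, hq, hhalf]
      exact add_mem (mul_mem (add_mem (one_mem _) (X_mem_lifts _)) (ih m (by omega) hm))
        (mul_mem (X_mem_lifts _) ((mem_lifts _).mpr ⟨q, rfl⟩))
  refine fun n hn => ⟨fun k => ?_, fun k => ?_⟩
  · obtain ⟨q, hq⟩ := exists_sum_choose_mul_mul_eq_two_mul_map P n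
      fun m hm => hP m (mem_Icc.mp hm).1
    exact ⟨q.coeff k, by rw [hq, coeff_ofNat_mul, coeff_map, eq_intCast]⟩
  · obtain ⟨z, hz⟩ := (lifts_iff_coeff_lifts _).mp (hP (n + 1) (by omega)) k
    exact ⟨z, hz.symm⟩
end

section
/- Let P_n ∈ ℤ[t] be defined by P_3 = 1 and P_{n+1} = (1+t)·P_n + (t/2)·∑_{j=2}^{n-2} C(n,j)·P_{j+1}·P_{n-j+1}. Then for all n ≥ 3, the degree of P_n equals n − 3. -/
open Polynomial Finset


theorem keel_natDegree (P : ℕ → Polynomial ℚ) (h3 : P 3 = 1)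
    (hrec : ∀ n, 3 ≤ n → P (n + 1) = (1 + X) * P n +
      C (1/2 : ℚ) * X * ∑ j ∈ Icc 2 (n - 2),
        (n.choose j : Polynomial ℚ) * P (j + 1) * P (n - j + 1)) :
    ∀ n, 3 ≤ n → (P n).natDegree = n - 3 := by
  have key : ∀ n, 3 ≤ n → P n ≠ 0 ∧ (P n).natDegree = n - 3 := by
    intro n
    induction n using Nat.strong_induction_on with
    | _ n ih =>
      intro hn
      rcases eq_or_lt_of_le hn with h | h
      · rw [← h, h3]; simp
      · obtain ⟨m, rfl⟩ : ∃ m, n = m + 1 := ⟨n - 1, by omega⟩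
        have hm : 3 ≤ m := by omega
        have ihm := ih m (by omega) hm
        have h1X : (1 + X : Polynomial ℚ) ≠ 0 := by
          intro h
          have := congrArg (Polynomial.coeff · 0) h
          simp at this
        have hleft : ((1 + X) * P m).natDegree = m - 2 := by
          rw [natDegree_mul h1X ihm.1, ihm.2]
          have : (1 + X : Polynomial ℚ).natDegree = 1 := by
            rw [add_comm]
            simpa using natDegree_X_add_C (1 : ℚ)
          rw [this]; omega
        have hsum : (C (1/2 : ℚ) * X * ∑ j ∈ Icc 2 (m - 2),
            (m.choose j : Polynomial ℚ) * P (j + 1) * P (m - j + 1)).natDegree ≤ m - 3 := by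
          rcases Nat.lt_or_ge m 4 with h4 | h4
          · have hm3 : m = 3 := by omega
            subst hm3
            have he : Icc 2 (3 - 2) = (∅ : Finset ℕ) := rfl
            rw [he]
            simp
          refine le_trans (natDegree_mul_le) ?_
          have hCX : (C (1/2 : ℚ) * X).natDegree ≤ 1 := by
            refine le_trans natDegree_mul_le ?_
            simp
          have hS : (∑ j ∈ Icc 2 (m - 2),
              (m.choose j : Polynomial ℚ) * P (j + 1) * P (m - j + 1)).natDegree ≤ m - 4 := by
            refine natDegree_sum_le_of_forall_le _ _ ?_
            intro j hj
            simp only [mem_Icc] at hj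
            have hj1 : 3 ≤ j + 1 := by omega
            have hj2 : 3 ≤ m - j + 1 := by omega
            have d1 := (ih (j + 1) (by omega) hj1).2
            have d2 := (ih (m - j + 1) (by omega) hj2).2
            refine le_trans natDegree_mul_le ?_
            refine le_trans (add_le_add natDegree_mul_le le_rfl) ?_
            rw [d1, d2]
            have : ((m.choose j : Polynomial ℚ)).natDegree = 0 := by
              simp [Polynomial.natDegree_natCast]
            rw [this]
            omega
          exact le_trans (add_le_add hCX hS) (by omega)
        have hlt : (C (1/2 : ℚ) * X * ∑ j ∈ Icc 2 (m - 2),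
            (m.choose j : Polynomial ℚ) * P (j + 1) * P (m - j + 1)).natDegree
            < ((1 + X) * P m).natDegree := by
          rw [hleft]; omega
        have hdeg : (P (m + 1)).natDegree = m + 1 - 3 := by
          rw [hrec m hm, natDegree_add_eq_left_of_natDegree_lt hlt, hleft]
          omega
        refine ⟨?_, hdeg⟩
        intro h0
        rw [h0] at hdeg
        simp at hdeg
        omega
  exact fun n hn => (key n hn).2
end

section
/- Let P_n ∈ ℤ[t] be defined by P_3 = 1 and P_{n+1} = (1+t)·P_n + (t/2)·∑_{j=2}^{n-2} C(n,j)·P_{j+1}·P_{n-j+1}. Then for all n ≥ 3, P_n is monic with constant term 1. -/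
/-!
Induction on `n`, carrying along that `P n` has degree exactly `n - 3`. In the recurrence for
`P (n + 1)` the summand `P (j + 1) * P (n - j + 1)` has degree `(j - 2) + (n - j - 2) = n - 4`,
so after multiplication by `X / 2` the whole sum stays below the degree `n - 2` of the monic
term `(1 + X) * P n`; it therefore changes neither the leading coefficient nor, being divisible
by `X`, the constant term.
-/

open Polynomial Finset

theorem Polynomial.Monic.one_add_X_mul_add_X_mul {R : Type*} [CommRing R] [Nontrivial R]
    {p q : R[X]} (c : R) (hp : p.Monic) (hq : q.degree < p.degree) :
    ((1 + X) * p + C c * X * q).Monic ∧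
      ((1 + X) * p + C c * X * q).natDegree = p.natDegree + 1 := by
  have hX : (1 + X : R[X]) = X + C 1 := by rw [map_one, add_comm]
  have hlead : ((1 + X) * p).Monic := hX ▸ (monic_X_add_C 1).mul hp
  have hlt : (C c * X * q).degree < ((1 + X) * p).degree :=
    calc (C c * X * q).degree ≤ (C c * X).degree + q.degree := degree_mul_le _ _
      _ ≤ 1 + q.degree := add_le_add_left (degree_C_mul_X_le c) _
      _ < 1 + p.degree := WithBot.add_lt_add_left (by simp) hq
      _ = ((1 + X) * p).degree := by rw [hp.degree_mul, hX, degree_X_add_C]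
  refine ⟨hlead.add_of_left hlt, ?_⟩
  rw [natDegree_add_eq_left_of_degree_lt hlt, hX, (monic_X_add_C 1).natDegree_mul hp,
    natDegree_X_add_C, add_comm]

theorem Polynomial.coeff_zero_one_add_X_mul_add_X_mul {R : Type*} [CommRing R]
    (p q : R[X]) (c : R) : ((1 + X) * p + C c * X * q).coeff 0 = p.coeff 0 := by
  simp [coeff_zero_eq_eval_zero]

theorem degree_sum_choose_mul_lt {R : Type*} [CommRing R] (P : ℕ → R[X]) {m : ℕ}
    (hP : ∀ k, 3 ≤ k → k < m → (P k).natDegree ≤ k - 3) :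
    (∑ j ∈ Icc 2 (m - 2), (m.choose j : R[X]) * P (j + 1) * P (m - j + 1)).degree <
      (m - 3 : ℕ) := by
  refine (degree_sum_le _ _).trans_lt <|
    (Finset.sup_lt_iff (WithBot.bot_lt_coe _)).2 fun j hj => ?_
  rw [mem_Icc] at hj
  have hleft := hP (j + 1) (by omega) (by omega)
  have hright := hP (m - j + 1) (by omega) (by omega)
  have hprod : ((m.choose j : R[X]) * P (j + 1) * P (m - j + 1)).natDegree ≤
      (P (j + 1)).natDegree + (P (m - j + 1)).natDegree :=
    calc _ ≤ ((m.choose j : R[X]) * P (j + 1)).natDegree + (P (m - j + 1)).natDegree :=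
          natDegree_mul_le
      _ ≤ (P (j + 1)).natDegree + (P (m - j + 1)).natDegree := by
          grw [natDegree_mul_le, natDegree_natCast, zero_add]
  exact degree_le_natDegree.trans_lt (by exact_mod_cast (by omega : _ < m - 3))

theorem keel_monic_constant (P : ℕ → Polynomial ℚ) (h3 : P 3 = 1)
    (hrec : ∀ n, 3 ≤ n → P (n + 1) = (1 + X) * P n +
      C (1/2 : ℚ) * X * ∑ j ∈ Icc 2 (n - 2),
        (n.choose j : Polynomial ℚ) * P (j + 1) * P (n - j + 1)) :
    ∀ n, 3 ≤ n → (P n).Monic ∧ (P n).coeff 0 = 1 := by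
  suffices key : ∀ n, 3 ≤ n → (P n).Monic ∧ (P n).natDegree = n - 3 ∧ (P n).coeff 0 = 1 from
    fun n hn => ⟨(key n hn).1, (key n hn).2.2⟩
  intro n
  induction n using Nat.strong_induction_on with
  | _ n ih =>
    intro hn
    rcases hn.eq_or_lt with rfl | hlt
    · simp [h3]
    obtain ⟨m, rfl⟩ : ∃ m, n = m + 1 := ⟨n - 1, by omega⟩
    obtain ⟨hmonic, hdeg, hcoeff⟩ := ih m (by omega) (by omega)
    have hsum := degree_sum_choose_mul_lt P (m := m) fun k hk hkm => (ih k (by omega) hk).2.1.le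
    rw [← hdeg, ← degree_eq_natDegree hmonic.ne_zero] at hsum
    obtain ⟨hmonic', hdeg'⟩ := hmonic.one_add_X_mul_add_X_mul (1 / 2) hsum
    rw [hrec m (by omega), coeff_zero_one_add_X_mul_add_X_mul, hdeg']
    exact ⟨hmonic', by omega, hcoeff⟩
end

section
/- Let P_n ∈ ℤ[t] be defined by P_3 = 1 and P_{n+1} = (1+t)·P_n + (t/2)·∑_{j=2}^{n-2} C(n,j)·P_{j+1}·P_{n-j+1}. Then for every n ≥ 3, P_n is palindromic: t^{n-3}·P_n(1/t) = P_n(t), i.e. the coefficient of t^k equals the coefficient of t^{n-3-k} for all 0 ≤ k ≤ n−3. -/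
/-!
Call `p` palindromic of degree `N` when `deg p ≤ N` and `t^N p(1/t) = p(t)`. This property is
preserved by sums, and degrees add under products; `1 + t` and `t` are palindromic of degrees
`1` and `2`. Hence, by strong induction, every term of the recurrence for `P_{n+1}` is palindromic
of degree `n - 2`: `(1 + t) P_n` as `1 + (n - 3)`, and `t P_{j+1} P_{n-j+1}` as
`2 + (j - 2) + (n - j - 2)`.
-/

open Polynomial Finset

namespace Polynomial

variable {R : Type*} [Semiring R]

/-- The degree bound is part of the notion because `reflect N` fixes the coefficients above `N`. -/
def IsPalindromic (N : ℕ) (p : R[X]) : Prop :=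
  p.natDegree ≤ N ∧ p.reflect N = p

theorem isPalindromic_zero (N : ℕ) : IsPalindromic N (0 : R[X]) :=
  ⟨by simp, reflect_zero⟩

theorem isPalindromic_natCast (n : ℕ) : IsPalindromic 0 (n : R[X]) :=
  ⟨(natDegree_natCast n).le, by rw [← C_eq_natCast, reflect_C, pow_zero, mul_one]⟩

theorem isPalindromic_one : IsPalindromic 0 (1 : R[X]) := by
  simpa using isPalindromic_natCast (R := R) 1

theorem isPalindromic_X : IsPalindromic 2 (X : R[X]) :=
  ⟨natDegree_X_le.trans (by norm_num), by simpa using reflect_monomial 2 1 (R := R)⟩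

theorem isPalindromic_one_add_X : IsPalindromic 1 (1 + X : R[X]) :=
  ⟨(natDegree_add_le _ _).trans (max_le (by simp) natDegree_X_le),
    by rw [reflect_add, reflect_one, reflect_one_X, pow_one, add_comm]⟩

namespace IsPalindromic

variable {N M : ℕ} {p q : R[X]}

theorem add (hp : IsPalindromic N p) (hq : IsPalindromic N q) : IsPalindromic N (p + q) :=
  ⟨(natDegree_add_le _ _).trans (max_le hp.1 hq.1), by rw [reflect_add, hp.2, hq.2]⟩

theorem mul (hp : IsPalindromic N p) (hq : IsPalindromic M q) : IsPalindromic (N + M) (p * q) :=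
  ⟨natDegree_mul_le.trans (add_le_add hp.1 hq.1), by rw [reflect_mul _ _ hp.1 hq.1, hp.2, hq.2]⟩

theorem C_mul (r : R) (hp : IsPalindromic N p) : IsPalindromic N (C r * p) :=
  ⟨(natDegree_C_mul_le r p).trans hp.1, by rw [reflect_C_mul, hp.2]⟩

theorem sum {ι : Type*} {s : Finset ι} {f : ι → R[X]}
    (h : ∀ i ∈ s, IsPalindromic N (f i)) : IsPalindromic N (∑ i ∈ s, f i) :=
  Finset.sum_induction f (IsPalindromic N) (fun _ _ => add) (isPalindromic_zero N) h

theorem coeff_eq (hp : IsPalindromic N p) {k : ℕ} (hk : k ≤ N) :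
    p.coeff k = p.coeff (N - k) := by
  conv_lhs => rw [← hp.2]
  rw [coeff_reflect, revAt_le hk]

end IsPalindromic

end Polynomial

theorem keel_palindromic (P : ℕ → Polynomial ℚ) (h3 : P 3 = 1)
    (hrec : ∀ n, 3 ≤ n → P (n + 1) = (1 + X) * P n +
      C (1/2 : ℚ) * X * ∑ j ∈ Icc 2 (n - 2),
        (n.choose j : Polynomial ℚ) * P (j + 1) * P (n - j + 1)) :
    ∀ n, 3 ≤ n → ∀ k, k ≤ n - 3 →
      (P n).coeff k = (P n).coeff (n - 3 - k) := by
  have hpal : ∀ n, 3 ≤ n → IsPalindromic (n - 3) (P n) := by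
    intro n
    induction n using Nat.strong_induction_on with
    | _ n ih =>
      intro hn
      rcases hn.eq_or_lt with rfl | hn
      · simpa [h3] using isPalindromic_one
      obtain ⟨m, rfl⟩ : ∃ m, n = m + 1 := ⟨n - 1, by omega⟩
      have hm : 3 ≤ m := by omega
      rw [hrec m hm, show m + 1 - 3 = 1 + (m - 3) by omega, mul_assoc, mul_sum]
      refine (isPalindromic_one_add_X.mul (ih m (by omega) hm)).add
        (.C_mul _ (.sum fun j hj => ?_))
      rw [mem_Icc] at hj
      have hleft := ih (j + 1) (by omega) (by omega)
      have hright := ih (m - j + 1) (by omega) (by omega)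
      rw [show 1 + (m - 3) = 2 + (0 + (j + 1 - 3) + (m - j + 1 - 3)) by omega]
      exact isPalindromic_X.mul (((isPalindromic_natCast _).mul hleft).mul hright)
  intro n hn k hk
  exact (hpal n hn).coeff_eq hk
end

section
/- Define a_k(n) for n ≥ 3 and k ≥ 0 by a_0(3) = 1, a_k(3) = 0 for k ≥ 1, and a_k(n+1) = a_k(n) + a_{k-1}(n) + (1/2)·∑_{j=2}^{n-2} C(n,j)·∑_{l=0}^{k-1} a_l(j+1)·a_{k-1-l}(n-j+1) (with a_{-1}(n) := 0). Then a_1(n) = 2^{n-1} − n(n-1)/2 − 1 for all n ≥ 4. -/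
/-!
Induction on `n` shows `a_0(n) = 1`, so the recurrence for `a_1` collapses to
`a_1(n+1) = a_1(n) + 1 + (1/2) ∑_{j=2}^{n-2} C(n,j)`, and this sum is `2^n` minus the four
boundary binomial coefficients `1, n, n, 1`. Hence `a_1(n+1) = a_1(n) + 2^{n-1} - n`,
which the closed formula satisfies.
-/

open Finset

theorem Nat.sum_Icc_choose_two_sub_two {n : ℕ} (hn : 3 ≤ n) :
    ∑ j ∈ Icc 2 (n - 2), n.choose j + 2 * n + 2 = 2 ^ n := by
  have hsub : Icc 2 (n - 2) ⊆ range (n + 1) := by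
    intro j hj
    simp only [mem_Icc, mem_range] at hj ⊢
    omega
  have hcompl : range (n + 1) \ Icc 2 (n - 2) = {0, 1, n - 1, n} := by
    ext j
    simp only [mem_sdiff, mem_range, mem_Icc, mem_insert, mem_singleton]
    omega
  have hedges : ∑ j ∈ ({0, 1, n - 1, n} : Finset ℕ), n.choose j = 2 * n + 2 := by
    rw [sum_insert (by simp; omega), sum_insert (by simp; omega), sum_pair (by omega),
      Nat.choose_symm_of_eq_add (show n = n - 1 + 1 by omega), Nat.choose_zero_right, Nat.choose_one_right,
      Nat.choose_self]
    ring
  rw [← Nat.sum_range_choose, ← sum_sdiff hsub, hcompl, hedges]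
  ring

section KeelRecurrence

variable {a : ℕ → ℕ → ℚ}
  (hrec : ∀ n, 3 ≤ n → ∀ k, a k (n + 1) =
      a k n + (if k = 0 then 0 else a (k - 1) n) +
      (1/2 : ℚ) * ∑ j ∈ Icc 2 (n - 2), (n.choose j : ℚ) *
        ∑ l ∈ range k, a l (j + 1) * a (k - 1 - l) (n - j + 1))
include hrec

theorem keel_a0_eq_one (h03 : a 0 3 = 1) {n : ℕ} (hn : 3 ≤ n) : a 0 n = 1 := by
  induction n, hn using Nat.le_induction with
  | base => exact h03
  | succ n hn ih => simpa [ih] using hrec n hn 0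

theorem keel_a1_succ (h03 : a 0 3 = 1) {n : ℕ} (hn : 3 ≤ n) :
    a 1 (n + 1) = a 1 n + 2 ^ n / 2 - n := by
  have hterm : ∀ j ∈ Icc 2 (n - 2), (n.choose j : ℚ) *
      ∑ l ∈ range 1, a l (j + 1) * a (1 - 1 - l) (n - j + 1) = n.choose j := by
    intro j hj
    simp only [mem_Icc] at hj
    simp [keel_a0_eq_one hrec h03 (n := j + 1) (by omega),
      keel_a0_eq_one hrec h03 (n := n - j + 1) (by omega)]
  have hsum : (∑ j ∈ Icc 2 (n - 2), n.choose j : ℚ) = 2 ^ n - 2 * n - 2 := by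
    have := congrArg (Nat.cast (R := ℚ)) (Nat.sum_Icc_choose_two_sub_two hn)
    push_cast at this
    linarith
  rw [hrec n hn 1, sum_congr rfl hterm, hsum, if_neg one_ne_zero,
    keel_a0_eq_one hrec h03 hn]
  ring

end KeelRecurrence

theorem keel_a1 (a : ℕ → ℕ → ℚ) (h03 : a 0 3 = 1) (hk3 : ∀ k, 1 ≤ k → a k 3 = 0)
    (hrec : ∀ n, 3 ≤ n → ∀ k, a k (n + 1) =
      a k n + (if k = 0 then 0 else a (k - 1) n) +
      (1/2 : ℚ) * ∑ j ∈ Icc 2 (n - 2), (n.choose j : ℚ) *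
        ∑ l ∈ range k, a l (j + 1) * a (k - 1 - l) (n - j + 1)) :
    ∀ n, 4 ≤ n → a 1 n = 2 ^ (n - 1) - (n * (n - 1) : ℚ) / 2 - 1 := by
  intro n hn
  induction n, hn using Nat.le_induction with
  | base =>
    rw [keel_a1_succ hrec h03 le_rfl, hk3 1 le_rfl]
    norm_num
  | succ n hn ih =>
    obtain ⟨m, rfl⟩ : ∃ m, n = m + 1 := ⟨n - 1, by omega⟩
    rw [keel_a1_succ hrec h03 (by omega), ih]
    push_cast
    ring
end
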